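/- arXiv:2011.03320 — 2 statements merged into one kernel-verified Lean document; each statement's English description precedes it below -/
import Mathlib

section
/- Let a, b, c ≥ 0 with a = b (i.e., ∑_{S} Γ = ∑_{Sᶜ} |Γ|), n ≥ 1, and σ > 0. Define L(E) = a·exp(−(2(1+(n−1)E)²−2)/(2σ²)) + a₂·exp(−2(nE)²/(2σ²)) − b·exp(−(1−2nE(1+(n−1)E))/(2σ²)) for E ≥ 0, where a₂ ≥ 0. Then L is nonincreasing in E on [0,∞), and lim_{E→0⁺} L(E) = a + a₂ − b·exp(−1/(2σ²)). -/
/-!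
Each of the three Gaussian terms is monotone on its own: the exponents of the two positive terms
are decreasing in `E` and the exponent of the subtracted term is increasing, as soon as `n ≥ 1`
makes every polynomial coefficient nonnegative. The limit is the value at `E = 0`, by continuity.
-/

open Real Set

theorem MonotoneOn.antitoneOn_const_mul_exp_neg_div {s : Set ℝ} {g : ℝ → ℝ} {c d : ℝ}
    (hg : MonotoneOn g s) (hc : 0 ≤ c) (hd : 0 ≤ d) :
    AntitoneOn (fun x => c * exp (-g x / d)) s := by
  intro x hx y hy hxy
  dsimp only
  gcongr
  exact hg hx hy hxy

theorem AntitoneOn.monotoneOn_const_mul_exp_neg_div {s : Set ℝ} {g : ℝ → ℝ} {c d : ℝ}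
    (hg : AntitoneOn g s) (hc : 0 ≤ c) (hd : 0 ≤ d) :
    MonotoneOn (fun x => c * exp (-g x / d)) s := by
  intro x hx y hy hxy
  dsimp only
  gcongr
  exact hg hx hy hxy

theorem monotoneOn_two_mul_one_add_mul_sq_sub_two {m : ℝ} (hm : 0 ≤ m) :
    MonotoneOn (fun E : ℝ => 2 * (1 + m * E) ^ 2 - 2) (Ici 0) := by
  intro x (hx : 0 ≤ x) y _ hxy
  have : (1 + m * x) ^ 2 ≤ (1 + m * y) ^ 2 := by gcongr
  dsimp only
  linarith

theorem monotoneOn_two_mul_mul_sq (k : ℝ) :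
    MonotoneOn (fun E : ℝ => 2 * (k * E) ^ 2) (Ici 0) := by
  intro x (hx : 0 ≤ x) y _ hxy
  dsimp only
  rw [mul_pow, mul_pow]
  gcongr

theorem antitoneOn_one_sub_two_mul_mul_one_add_mul {k m : ℝ} (hk : 0 ≤ k) (hm : 0 ≤ m) :
    AntitoneOn (fun E : ℝ => 1 - 2 * k * E * (1 + m * E)) (Ici 0) := by
  intro x (hx : 0 ≤ x) y (hy : 0 ≤ y) hxy
  dsimp only
  gcongr

theorem stmt_3_general (a a₂ b : ℝ) (ha : 0 ≤ a) (hb : 0 ≤ b) (hc : 0 ≤ a₂)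
    (n : ℕ) (hn : 1 ≤ n) (σ : ℝ) :
    AntitoneOn (fun E : ℝ =>
        a * Real.exp (-(2 * (1 + ((n : ℝ) - 1) * E) ^ 2 - 2) / (2 * σ ^ 2))
      + a₂ * Real.exp (-(2 * ((n : ℝ) * E) ^ 2) / (2 * σ ^ 2))
      - b * Real.exp (-(1 - 2 * (n : ℝ) * E * (1 + ((n : ℝ) - 1) * E)) / (2 * σ ^ 2)))
      (Set.Ici (0 : ℝ)) ∧
    Filter.Tendsto (fun E : ℝ =>
        a * Real.exp (-(2 * (1 + ((n : ℝ) - 1) * E) ^ 2 - 2) / (2 * σ ^ 2))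
      + a₂ * Real.exp (-(2 * ((n : ℝ) * E) ^ 2) / (2 * σ ^ 2))
      - b * Real.exp (-(1 - 2 * (n : ℝ) * E * (1 + ((n : ℝ) - 1) * E)) / (2 * σ ^ 2)))
      (nhdsWithin 0 (Set.Ioi 0))
      (nhds (a + a₂ - b * Real.exp (-1 / (2 * σ ^ 2)))) := by
  have hm : (0 : ℝ) ≤ n - 1 := by
    rw [sub_nonneg]
    exact_mod_cast hn
  have hd : (0 : ℝ) ≤ 2 * σ ^ 2 := by positivity
  refine ⟨?_, ?_⟩
  · have h₁ := (monotoneOn_two_mul_one_add_mul_sq_sub_two hm).antitoneOn_const_mul_exp_neg_div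
      ha hd
    have h₂ := (monotoneOn_two_mul_mul_sq (n : ℝ)).antitoneOn_const_mul_exp_neg_div hc hd
    have h₃ := (antitoneOn_one_sub_two_mul_mul_one_add_mul n.cast_nonneg
      hm).monotoneOn_const_mul_exp_neg_div hb hd
    simpa only [sub_eq_add_neg] using (h₁.add h₂).add h₃.neg
  · have hcont : Continuous fun E : ℝ =>
        a * Real.exp (-(2 * (1 + ((n : ℝ) - 1) * E) ^ 2 - 2) / (2 * σ ^ 2))
      + a₂ * Real.exp (-(2 * ((n : ℝ) * E) ^ 2) / (2 * σ ^ 2))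
      - b * Real.exp (-(1 - 2 * (n : ℝ) * E * (1 + ((n : ℝ) - 1) * E)) / (2 * σ ^ 2)) := by
      fun_prop
    convert (hcont.tendsto 0).mono_left nhdsWithin_le_nhds using 2
    norm_num

theorem stmt_3 (a a₂ b : ℝ) (ha : 0 ≤ a) (hb : 0 ≤ b) (hc : 0 ≤ a₂) (hab : a = b)
    (n : ℕ) (hn : 1 ≤ n) (σ : ℝ) (hσ : 0 < σ) :
    AntitoneOn (fun E : ℝ =>
        a * Real.exp (-(2 * (1 + ((n : ℝ) - 1) * E) ^ 2 - 2) / (2 * σ ^ 2))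
      + a₂ * Real.exp (-(2 * ((n : ℝ) * E) ^ 2) / (2 * σ ^ 2))
      - b * Real.exp (-(1 - 2 * (n : ℝ) * E * (1 + ((n : ℝ) - 1) * E)) / (2 * σ ^ 2)))
      (Set.Ici (0 : ℝ)) ∧
    Filter.Tendsto (fun E : ℝ =>
        a * Real.exp (-(2 * (1 + ((n : ℝ) - 1) * E) ^ 2 - 2) / (2 * σ ^ 2))
      + a₂ * Real.exp (-(2 * ((n : ℝ) * E) ^ 2) / (2 * σ ^ 2))
      - b * Real.exp (-(1 - 2 * (n : ℝ) * E * (1 + ((n : ℝ) - 1) * E)) / (2 * σ ^ 2)))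
      (nhdsWithin 0 (Set.Ioi 0))
      (nhds (a + a₂ - b * Real.exp (-1 / (2 * σ ^ 2)))) :=
  stmt_3_general a a₂ b ha hb hc n hn σ
end

section
/- Let r : Fin n → H be unit vectors with 0 ≤ ⟨r_i, r_j⟩ ≤ E for i ≠ j, and let t ∈ H be a unit vector with 0 ≤ ⟨t, r_k⟩ ≤ E for all k. Set W = ∑_k r_k. Then for any i, ⟨W, r_i − t⟩² ≥ 1 − 2nE(1 + (n−1)E) whenever the right-hand side is nonnegative; more precisely ⟨W, r_i⟩² + ⟨W, t⟩² − 2⟨W, r_i⟩⟨W, t⟩ ≥ 1 − 2nE(1+(n−1)E). -/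
/-! With `W = ∑ k, r k`, `a = ⟪W, r i⟫` and `b = ⟪W, t⟫`, the hypotheses give
`1 ≤ a ≤ 1 + (n - 1) E` and `0 ≤ b ≤ n E`. Hence
`a² + b² - 2ab ≥ a² - 2ab ≥ 1 - 2 (1 + (n - 1) E) n E`. -/

open RealInnerProductSpace Finset

section SumOfUnitVectors

variable {ι H : Type*} [Fintype ι] [NormedAddCommGroup H] [InnerProductSpace ℝ H]
  {r : ι → H}

theorem one_le_inner_sum_of_inner_nonneg (i : ι) (hi : ‖r i‖ = 1)
    (hnonneg : ∀ k, 0 ≤ ⟪r k, r i⟫) : 1 ≤ ⟪∑ k, r k, r i⟫ := by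
  rw [sum_inner]
  calc (1 : ℝ) = ⟪r i, r i⟫ := by rw [real_inner_self_eq_norm_sq, hi, one_pow]
    _ ≤ ∑ k, ⟪r k, r i⟫ := single_le_sum (fun k _ ↦ hnonneg k) (mem_univ i)

theorem inner_sum_le_one_add_mul [DecidableEq ι] {E : ℝ} (i : ι) (hi : ‖r i‖ = 1)
    (hbound : ∀ k, k ≠ i → ⟪r k, r i⟫ ≤ E) :
    ⟪∑ k, r k, r i⟫ ≤ 1 + ((Fintype.card ι : ℝ) - 1) * E := by
  rw [sum_inner, ← add_sum_erase _ _ (mem_univ i), real_inner_self_eq_norm_sq, hi, one_pow]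
  gcongr
  calc ∑ k ∈ univ.erase i, ⟪r k, r i⟫ ≤ #(univ.erase i) • E :=
        sum_le_card_nsmul _ _ _ fun k hk ↦ hbound k (ne_of_mem_erase hk)
    _ = ((Fintype.card ι : ℝ) - 1) * E := by
        rw [nsmul_eq_mul, cast_card_erase_of_mem (mem_univ i), card_univ]

theorem inner_sum_nonneg {t : H} (h : ∀ k, 0 ≤ ⟪t, r k⟫) : 0 ≤ ⟪∑ k, r k, t⟫ := by
  rw [sum_inner]
  exact sum_nonneg fun k _ ↦ real_inner_comm t (r k) ▸ h k

theorem inner_sum_le_card_mul {t : H} {E : ℝ} (h : ∀ k, ⟪t, r k⟫ ≤ E) :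
    ⟪∑ k, r k, t⟫ ≤ Fintype.card ι * E := by
  rw [sum_inner, ← nsmul_eq_mul, ← card_univ]
  exact sum_le_card_nsmul _ _ _ fun k _ ↦ real_inner_comm t (r k) ▸ h k

end SumOfUnitVectors

theorem one_sub_two_mul_le_sq_add_sq_sub_two_mul {a b A B : ℝ} (ha : 1 ≤ a) (haA : a ≤ A)
    (hb : 0 ≤ b) (hbB : b ≤ B) : 1 - 2 * B * A ≤ a ^ 2 + b ^ 2 - 2 * a * b := by
  have hab : a * b ≤ A * B := mul_le_mul haA hbB hb (by linarith)
  nlinarith [sq_nonneg b]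

theorem stmt_6_general {H : Type*} [NormedAddCommGroup H] [InnerProductSpace ℝ H]
    (n : ℕ) (r : Fin n → H) (E : ℝ)
    (hnorm : ∀ i, ‖r i‖ = 1)
    (hnonneg : ∀ i j, 0 ≤ ⟪r i, r j⟫)
    (hbound : ∀ i j, i ≠ j → ⟪r i, r j⟫ ≤ E)
    (t : H)
    (htr : ∀ k, 0 ≤ ⟪t, r k⟫ ∧ ⟪t, r k⟫ ≤ E) :
    ∀ i, ⟪(∑ k, r k), r i⟫ ^ 2 + ⟪(∑ k, r k), t⟫ ^ 2
        - 2 * ⟪(∑ k, r k), r i⟫ * ⟪(∑ k, r k), t⟫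
      ≥ 1 - 2 * (n : ℝ) * E * (1 + ((n : ℝ) - 1) * E) := by
  intro i
  have ha_upper := inner_sum_le_one_add_mul i (hnorm i) fun k hk ↦ hbound k i hk
  have hb_upper := inner_sum_le_card_mul fun k ↦ (htr k).2
  rw [Fintype.card_fin] at ha_upper hb_upper
  have key := one_sub_two_mul_le_sq_add_sq_sub_two_mul
    (one_le_inner_sum_of_inner_nonneg i (hnorm i) fun k ↦ hnonneg k i) ha_upper
    (inner_sum_nonneg fun k ↦ (htr k).1) hb_upper
  rw [mul_assoc 2 (n : ℝ) E]
  exact key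

theorem stmt_6 {H : Type*} [NormedAddCommGroup H] [InnerProductSpace ℝ H]
    (n : ℕ) (r : Fin n → H) (E : ℝ) (hE : 0 ≤ E)
    (hnorm : ∀ i, ‖r i‖ = 1)
    (hnonneg : ∀ i j, 0 ≤ ⟪r i, r j⟫)
    (hbound : ∀ i j, i ≠ j → ⟪r i, r j⟫ ≤ E)
    (t : H) (ht : ‖t‖ = 1)
    (htr : ∀ k, 0 ≤ ⟪t, r k⟫ ∧ ⟪t, r k⟫ ≤ E) :
    ∀ i, ⟪(∑ k, r k), r i⟫ ^ 2 + ⟪(∑ k, r k), t⟫ ^ 2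
        - 2 * ⟪(∑ k, r k), r i⟫ * ⟪(∑ k, r k), t⟫
      ≥ 1 - 2 * (n : ℝ) * E * (1 + ((n : ℝ) - 1) * E) :=
  stmt_6_general n r E hnorm hnonneg hbound t htr
end
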